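/- arXiv:2103.16411 — 2 statements merged into one kernel-verified Lean document; each statement's English description precedes it below -/
import Mathlib

section
/- For the Möbius transformation F_a(z) = (z - a)/(1 - conj(a)·z) with 0 < a < 1 real, and any point p = cos θ + i sin θ on the unit circle with θ ∈ (0, π) ∪ (π, 2π) (i.e., p ≠ ±1), the real part of F_a(p) is strictly less than the real part of p. -/
/-!
On the unit circle `conj p = p⁻¹`, so `(p - a) (1 - a conj p) = p - 2a + a² conj p` and
`|1 - a p|² = 1 + a² - 2a Re p`. Hence `Re F_a(p) - Re p = -2a (Im p)² / |1 - a p|²`,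
which is negative as soon as `p ≠ ±1`.
-/

open Complex

lemma Complex.im_ne_zero_of_norm_eq_one {p : ℂ} (hp : ‖p‖ = 1) (hp1 : p ≠ 1) (hpm1 : p ≠ -1) :
    p.im ≠ 0 := by
  intro him
  have hre : |p.re| = 1 := hp ▸ abs_re_eq_norm.mpr him
  rcases abs_eq (zero_le_one' ℝ) |>.mp hre with h | h
  · exact hp1 (ext (by simpa using h) (by simpa using him))
  · exact hpm1 (ext (by simpa using h) (by simpa using him))

lemma Complex.one_sub_ofReal_mul_ne_zero {a : ℝ} (ha : a ≠ 0) {p : ℂ} (him : p.im ≠ 0) :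
    1 - (a : ℂ) * p ≠ 0 := by
  intro h
  have := congrArg im h
  simp only [sub_im, one_im, im_ofReal_mul, zero_im, zero_sub, neg_eq_zero] at this
  exact mul_ne_zero ha him this

lemma Complex.re_div_one_sub_ofReal_mul_sub_re {a : ℝ} {p : ℂ} (hp : ‖p‖ = 1)
    (hden : 1 - (a : ℂ) * p ≠ 0) :
    ((p - a) / (1 - a * p)).re - p.re = -(2 * a * p.im ^ 2) / normSq (1 - a * p) := by
  have hsq : p.re ^ 2 + p.im ^ 2 = 1 := by
    have h := Complex.sq_norm p
    rwa [hp, one_pow, normSq_apply, ← sq, ← sq, eq_comm] at h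
  have hN : normSq (1 - a * p) ≠ 0 := (normSq_pos.mpr hden).ne'
  rw [eq_div_iff hN, div_re, ← add_div, sub_mul, div_mul_cancel₀ _ hN]
  simp only [normSq_apply, sub_re, sub_im, one_re, one_im, re_ofReal_mul, im_ofReal_mul,
    ofReal_re, ofReal_im]
  linear_combination (a - a ^ 2 * p.re) * hsq

theorem stmt_0_general (a : ℝ) (ha0 : 0 < a) (p : ℂ)
    (hp : ‖p‖ = 1) (hp1 : p ≠ 1) (hpm1 : p ≠ -1) :
    ((p - (a : ℂ)) / (1 - (a : ℂ) * p)).re < p.re := by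
  have him := im_ne_zero_of_norm_eq_one hp hp1 hpm1
  have hden := one_sub_ofReal_mul_ne_zero ha0.ne' him
  rw [← sub_neg, re_div_one_sub_ofReal_mul_sub_re hp hden]
  exact div_neg_of_neg_of_pos (neg_neg_of_pos (by positivity)) (normSq_pos.mpr hden)

theorem stmt_0 (a : ℝ) (ha0 : 0 < a) (ha1 : a < 1) (p : ℂ)
    (hp : ‖p‖ = 1) (hp1 : p ≠ 1) (hpm1 : p ≠ -1) :
    ((p - (a : ℂ)) / (1 - (a : ℂ) * p)).re < p.re :=
  stmt_0_general a ha0 p hp hp1 hpm1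
end

section
/- Let B : 𝔻 → ℂ be integrable with ∫_𝔻 B ≠ 0 and ∫_𝔻 B(z)/z dz defined with nonzero value. Suppose B̃(z) = e^{-2iθ}·B(e^{iθ}·z) for some θ ∈ ℝ, and both B and B̃ satisfy arg ∫_𝔻 B = arg ∫_𝔻 B̃ = 0 and arg ∫_𝔻 B(z)/z dz, arg ∫_𝔻 B̃(z)/z dz ∈ [0, π). Then B̃ = B. -/
/-!
Rotation invariance of area measure gives `∫ B̃ = e^{-2iθ} ∫ B`; since both integrals have
argument `0` and the same modulus, `e^{-2iθ} = 1`, so `e^{iθ} = ±1`. For `e^{iθ} = -1` the same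
invariance gives `∫ B̃(z)/z = -∫ B(z)/z`, and two nonzero opposite numbers cannot have the
same argument.
-/

open Complex MeasureTheory Metric

/-- The argument of a complex number, normalized to lie in `[0, 2π)`. -/
noncomputable def arg2pi (z : ℂ) : ℝ :=
  if Complex.arg z < 0 then Complex.arg z + 2 * Real.pi else Complex.arg z

lemma exp_arg2pi_mul_I (z : ℂ) :
    Complex.exp (arg2pi z * Complex.I) = Complex.exp (Complex.arg z * Complex.I) := by
  unfold arg2pi
  split_ifs
  · push_cast
    rw [add_mul, Complex.exp_add, Complex.exp_two_pi_mul_I, mul_one]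
  · rfl

lemma eq_of_arg2pi_eq_of_norm_eq {a b : ℂ} (harg : arg2pi a = arg2pi b) (hnorm : ‖a‖ = ‖b‖) :
    a = b := by
  rw [← Complex.norm_mul_exp_arg_mul_I a, ← Complex.norm_mul_exp_arg_mul_I b,
    ← exp_arg2pi_mul_I a, ← exp_arg2pi_mul_I b, harg, hnorm]

lemma LinearIsometryEquiv.setIntegral_ball_zero_comp {E F : Type*} [NormedAddCommGroup E]
    [InnerProductSpace ℝ E] [FiniteDimensional ℝ E] [MeasurableSpace E] [BorelSpace E]
    [NormedAddCommGroup F] [NormedSpace ℝ F] (f : E ≃ₗᵢ[ℝ] E) (g : E → F) (r : ℝ) :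
    ∫ x in ball (0 : E) r, g (f x) = ∫ x in ball (0 : E) r, g x := by
  have h := f.measurePreserving.setIntegral_preimage_emb
    f.toHomeomorph.measurableEmbedding g (ball 0 r)
  rwa [f.preimage_ball, map_zero] at h

lemma setIntegral_ball_zero_comp_exp_mul {F : Type*} [NormedAddCommGroup F] [NormedSpace ℝ F]
    (g : ℂ → F) (θ r : ℝ) :
    ∫ z in ball (0 : ℂ) r, g (Complex.exp (θ * Complex.I) * z) = ∫ z in ball (0 : ℂ) r, g z := by
  simpa [rotation_apply, Circle.coe_exp] using
    (rotation (Circle.exp θ)).setIntegral_ball_zero_comp g r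

theorem stmt_14_general (B B' : ℂ → ℂ) (θ : ℝ)
    (hB' : ∀ z, B' z = Complex.exp (-(2 * θ) * Complex.I) *
      B (Complex.exp (θ * Complex.I) * z))
    (hne : (∫ z in ball (0 : ℂ) 1, B z) ≠ 0)
    (hzne : (∫ z in ball (0 : ℂ) 1, B z / z) ≠ 0)
    (harg : arg2pi (∫ z in ball (0 : ℂ) 1, B z) = 0)
    (harg' : arg2pi (∫ z in ball (0 : ℂ) 1, B' z) = 0)
    (hargzeq : arg2pi (∫ z in ball (0 : ℂ) 1, B' z / z)
      = arg2pi (∫ z in ball (0 : ℂ) 1, B z / z)) :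
    B' = B := by
  set c := Complex.exp (-(2 * θ) * Complex.I)
  set u := Complex.exp (θ * Complex.I)
  have hB'fun : B' = fun z => c * B (u * z) := funext hB'
  have hint : ∫ z in ball (0 : ℂ) 1, B' z = c * ∫ z in ball (0 : ℂ) 1, B z := by
    rw [hB'fun, integral_const_mul, setIntegral_ball_zero_comp_exp_mul]
  have hc : c = 1 := by
    have hnorm : ‖c * ∫ z in ball (0 : ℂ) 1, B z‖ = ‖∫ z in ball (0 : ℂ) 1, B z‖ := by
      simp [c, Complex.norm_exp]
    refine mul_right_cancel₀ hne ?_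
    rw [one_mul]
    exact eq_of_arg2pi_eq_of_norm_eq (by rw [← hint, harg', harg]) hnorm
  have huu : u * u = 1 := by
    have hcuu : c * (u * u) = 1 := by
      rw [← Complex.exp_add, ← Complex.exp_add, ← Complex.exp_zero]
      ring_nf
    rwa [hc, one_mul] at hcuu
  obtain hu | hu := mul_self_eq_one_iff.mp huu
  · simp [hB'fun, hc, hu]
  · have hintz : ∫ z in ball (0 : ℂ) 1, B' z / z = -∫ z in ball (0 : ℂ) 1, B z / z :=
      calc ∫ z in ball (0 : ℂ) 1, B' z / z
          = ∫ z in ball (0 : ℂ) 1, -(B (u * z) / (u * z)) :=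
            setIntegral_congr_fun measurableSet_ball fun z _ => by rw [hB', hc, hu]; ring
        _ = -∫ z in ball (0 : ℂ) 1, B z / z := by
            rw [integral_neg, setIntegral_ball_zero_comp_exp_mul (fun w => B w / w)]
    have hnorm : ‖-∫ z in ball (0 : ℂ) 1, B z / z‖ = ‖∫ z in ball (0 : ℂ) 1, B z / z‖ :=
      norm_neg _
    rw [hintz] at hargzeq
    exact absurd (neg_eq_self.mp (eq_of_arg2pi_eq_of_norm_eq hargzeq hnorm)) hzne

/-- Normalization determines a unique representative: if `B̃(z) = e^{-2iθ} B(e^{iθ}z)` and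
both `B` and `B̃` satisfy the normalization conditions on the arguments of `∫ B` and
`∫ B(z)/z`, then `B̃ = B`. -/
theorem stmt_14 (B B' : ℂ → ℂ) (θ : ℝ)
    (hInt : IntegrableOn B (ball (0 : ℂ) 1))
    (hIntz : IntegrableOn (fun z => B z / z) (ball (0 : ℂ) 1))
    (hB' : ∀ z, B' z = Complex.exp (-(2 * θ) * Complex.I) *
      B (Complex.exp (θ * Complex.I) * z))
    (hne : (∫ z in ball (0 : ℂ) 1, B z) ≠ 0)
    (hzne : (∫ z in ball (0 : ℂ) 1, B z / z) ≠ 0)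
    (harg : arg2pi (∫ z in ball (0 : ℂ) 1, B z) = 0)
    (harg' : arg2pi (∫ z in ball (0 : ℂ) 1, B' z) = 0)
    (hargz : arg2pi (∫ z in ball (0 : ℂ) 1, B z / z) ∈ Set.Ico 0 Real.pi)
    (hargz' : arg2pi (∫ z in ball (0 : ℂ) 1, B' z / z) ∈ Set.Ico 0 Real.pi)
    (hargzeq : arg2pi (∫ z in ball (0 : ℂ) 1, B' z / z)
      = arg2pi (∫ z in ball (0 : ℂ) 1, B z / z)) :
    B' = B :=
  stmt_14_general B B' θ hB' hne hzne harg harg' hargzeq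
end
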